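/- arXiv:2407.07900 — 5 statements merged into one kernel-verified Lean document; each statement's English description precedes it below -/
import Mathlib

section
/- The function u(x,t) = 3(c-1) sech²(½√((c-1)/c)(x-ct)), for a real constant c > 1, is a smooth solution of the BBM equation u_t + u_x + u·u_x − u_txx = 0 on ℝ × ℝ. -/
/-- The BBM solitary wave profile as a function of (x, t). -/
noncomputable def bbmSol (c : ℝ) : ℝ → ℝ → ℝ := fun x t =>
  3 * (c - 1) * (1 / Real.cosh ((1/2) * Real.sqrt ((c - 1)/c) * (x - c * t)))^2

namespace BBMaux

noncomputable def P (c : ℝ) (z : ℝ) : ℝ := 3 * (c - 1) * (1 / Real.cosh z)^2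
noncomputable def Q (c : ℝ) (z : ℝ) : ℝ := -6 * (c - 1) * Real.sinh z / (Real.cosh z)^3
noncomputable def R (c : ℝ) (z : ℝ) : ℝ :=
  -6 * (c - 1) * (Real.cosh z ^ 2 - 3 * Real.sinh z ^ 2) / (Real.cosh z)^4
noncomputable def S (c : ℝ) (z : ℝ) : ℝ :=
  -6 * (c - 1) * (12 * Real.sinh z ^ 3 - 8 * Real.sinh z * Real.cosh z ^ 2) / (Real.cosh z)^5

lemma coshne (z : ℝ) : Real.cosh z ≠ 0 := ne_of_gt (Real.cosh_pos z)

lemma hP (c z : ℝ) : HasDerivAt (P c) (Q c z) z := by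
  have h := (((Real.hasDerivAt_cosh z).inv (coshne z)).pow 2).const_mul (3 * (c - 1))
  have e1 : (fun y => 3 * (c - 1) * (Real.cosh y)⁻¹ ^ 2) = P c := by
    funext y; simp [P, one_div]
  have e2 : (3 * (c - 1) * ((2:ℕ) * (Real.cosh z)⁻¹ ^ (2 - 1) * (-Real.sinh z / Real.cosh z ^ 2)))
      = Q c z := by
    simp only [Q]; field_simp [coshne z]; linear_combination (6 - 6 * c) * Real.sinh z * mul_inv_cancel₀ (coshne z)
  rw [← e1, ← e2]; exact h

lemma hQ (c z : ℝ) : HasDerivAt (Q c) (R c z) z := by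
  have h := (((Real.hasDerivAt_sinh z).mul
      (((Real.hasDerivAt_cosh z).pow 3).inv (pow_ne_zero 3 (coshne z)))).const_mul
      (-6 * (c - 1)))
  have e1 : (fun y => -6 * (c - 1) * (Real.sinh y * (Real.cosh y ^ 3)⁻¹)) = Q c := by
    funext y; simp [Q]; ring
  have e2 : (-6 * (c - 1) * (Real.cosh z * (Real.cosh z ^ 3)⁻¹ +
      Real.sinh z * (-((3:ℕ) * Real.cosh z ^ (3 - 1) * Real.sinh z) / (Real.cosh z ^ 3) ^ 2)))
      = R c z := by
    simp only [R]; field_simp; ring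
  rw [← e1, ← e2]; exact h

lemma hR (c z : ℝ) : HasDerivAt (R c) (S c z) z := by
  have h := (((((Real.hasDerivAt_cosh z).pow 2).sub
      (((Real.hasDerivAt_sinh z).pow 2).const_mul 3)).mul
      (((Real.hasDerivAt_cosh z).pow 4).inv (pow_ne_zero 4 (coshne z)))).const_mul
      (-6 * (c - 1)))
  have e1 : (fun y => -6 * (c - 1) * ((Real.cosh y ^ 2 - 3 * Real.sinh y ^ 2) * (Real.cosh y ^ 4)⁻¹)) = R c := by
    funext y; simp [R]; ring
  have e2 : (-6 * (c - 1) *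
      (((2:ℕ) * Real.cosh z ^ (2 - 1) * Real.sinh z - 3 * ((2:ℕ) * Real.sinh z ^ (2 - 1) * Real.cosh z)) *
          (Real.cosh z ^ 4)⁻¹ +
        (Real.cosh z ^ 2 - 3 * Real.sinh z ^ 2) *
          (-((4:ℕ) * Real.cosh z ^ (4 - 1) * Real.sinh z) / (Real.cosh z ^ 4) ^ 2)))
      = S c z := by
    simp only [S]; field_simp; ring
  rw [← e1, ← e2]; exact h

lemma key (c : ℝ) (hc : 1 < c) (z : ℝ) :
    Q c z * ((1/2) * Real.sqrt ((c - 1)/c) * (0 - c * 1))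
      + Q c z * ((1/2) * Real.sqrt ((c - 1)/c) * (1 - 0))
      + P c z * (Q c z * ((1/2) * Real.sqrt ((c - 1)/c) * (1 - 0)))
      - S c z * ((1/2) * Real.sqrt ((c - 1)/c) * (1 - 0))
          * ((1/2) * Real.sqrt ((c - 1)/c) * (1 - 0))
          * ((1/2) * Real.sqrt ((c - 1)/c) * (0 - c * 1)) = 0 := by
  obtain ⟨k, hkeq, hk2⟩ : ∃ k : ℝ, (1/2) * Real.sqrt ((c - 1)/c) = k ∧ k^2 = (c-1)/(4*c) := by
    refine ⟨_, rfl, ?_⟩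
    rw [mul_pow, Real.sq_sqrt (div_nonneg (by linarith) (by linarith : (0:ℝ) ≤ c))]
    ring
  rw [hkeq]
  have h2 : Real.sinh z ^ 2 = Real.cosh z ^ 2 - 1 := by
    have := Real.cosh_sq_sub_sinh_sq z; linarith
  have hch := coshne z
  have hk2' : c * k ^ 2 = (c - 1) / 4 := by
    rw [hk2]; field_simp
  have h5 : Real.cosh z ^ 2 * (Real.cosh z)⁻¹ ^ 5 = (Real.cosh z)⁻¹ ^ 3 := by
    field_simp
  simp only [P, Q, S]
  linear_combination (-6*(c-1)^2*k*Real.sinh z) * h5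
    + (-(18*(c-1)^2*k*Real.sinh z/Real.cosh z^5)) * h2
    + (k*(-6*(c-1)*(12*Real.sinh z^3 - 8*Real.sinh z*Real.cosh z^2)/Real.cosh z^5)) * hk2'

end BBMaux

theorem stmt0 (c : ℝ) (hc : 1 < c) :
    ContDiff ℝ (⊤ : ℕ∞) (fun p : ℝ × ℝ => bbmSol c p.1 p.2) ∧
    ∀ x t : ℝ,
      deriv (fun s => bbmSol c x s) t
        + deriv (fun y => bbmSol c y t) x
        + bbmSol c x t * deriv (fun y => bbmSol c y t) x
        - deriv (fun y => deriv (fun y' => deriv (fun s => bbmSol c y' s) t) y) x = 0 := by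
  set k : ℝ := (1/2) * Real.sqrt ((c - 1)/c) with hkdef
  have hbb : ∀ x t : ℝ, bbmSol c x t = BBMaux.P c (k * (x - c * t)) := fun x t => rfl
  constructor
  · have hPc : ContDiff ℝ (⊤ : ℕ∞) (BBMaux.P c) := by
      have h1 : ContDiff ℝ (⊤ : ℕ∞) (fun z : ℝ => (Real.cosh z)⁻¹) :=
        Real.contDiff_cosh.inv (fun z => BBMaux.coshne z)
      have h2 : ContDiff ℝ (⊤ : ℕ∞) (fun z : ℝ => 3 * (c - 1) * (Real.cosh z)⁻¹ ^ 2) :=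
        contDiff_const.mul (h1.pow 2)
      have he : (fun z : ℝ => 3 * (c - 1) * (Real.cosh z)⁻¹ ^ 2) = BBMaux.P c := by
        funext z; simp [BBMaux.P, one_div]
      rwa [he] at h2
    have hlin : ContDiff ℝ (⊤ : ℕ∞) (fun p : ℝ × ℝ => k * (p.1 - c * p.2)) :=
      contDiff_const.mul (contDiff_fst.sub (contDiff_const.mul contDiff_snd))
    have heq : (fun p : ℝ × ℝ => bbmSol c p.1 p.2)
        = (BBMaux.P c) ∘ (fun p : ℝ × ℝ => k * (p.1 - c * p.2)) := rfl
    rw [heq]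
    exact hPc.comp hlin
  · intro x t
    -- inner affine derivatives
    have hzt : ∀ x t : ℝ, HasDerivAt (fun s : ℝ => k * (x - c * s)) (k * (0 - c * 1)) t :=
      fun x t => ((hasDerivAt_const t x).sub ((hasDerivAt_id t).const_mul c)).const_mul k
    have hzx : ∀ x t : ℝ, HasDerivAt (fun y : ℝ => k * (y - c * t)) (k * (1 - 0)) x :=
      fun x t => ((hasDerivAt_id x).sub (hasDerivAt_const x (c * t))).const_mul k
    have hdt : ∀ x t : ℝ, deriv (fun s => bbmSol c x s) t
        = BBMaux.Q c (k * (x - c * t)) * (k * (0 - c * 1)) := by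
      intro x t
      exact ((BBMaux.hP c (k * (x - c * t))).comp t (hzt x t)).deriv
    have hdx : deriv (fun y => bbmSol c y t) x
        = BBMaux.Q c (k * (x - c * t)) * (k * (1 - 0)) := by
      exact ((BBMaux.hP c (k * (x - c * t))).comp x (hzx x t)).deriv
    have hmid : ∀ y : ℝ, deriv (fun y' => deriv (fun s => bbmSol c y' s) t) y
        = BBMaux.R c (k * (y - c * t)) * (k * (1 - 0)) * (k * (0 - c * 1)) := by
      intro y
      have e : (fun y' => deriv (fun s => bbmSol c y' s) t)
          = fun y' => BBMaux.Q c (k * (y' - c * t)) * (k * (0 - c * 1)) := by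
        funext y'; exact hdt y' t
      rw [e]
      exact (((BBMaux.hQ c (k * (y - c * t))).comp y (hzx y t)).mul_const
        (k * (0 - c * 1))).deriv
    have hout : deriv (fun y => deriv (fun y' => deriv (fun s => bbmSol c y' s) t) y) x
        = BBMaux.S c (k * (x - c * t)) * (k * (1 - 0)) * (k * (1 - 0)) * (k * (0 - c * 1)) := by
      have e : (fun y => deriv (fun y' => deriv (fun s => bbmSol c y' s) t) y)
          = fun y => BBMaux.R c (k * (y - c * t)) * (k * (1 - 0)) * (k * (0 - c * 1)) := by
        funext y; exact hmid y
      rw [e]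
      exact ((((BBMaux.hR c (k * (x - c * t))).comp x (hzx x t)).mul_const
        (k * (1 - 0))).mul_const (k * (0 - c * 1))).deriv
    rw [hdt x t, hdx, hout, hbb x t]
    have := BBMaux.key c hc (k * (x - c * t))
    rw [← hkdef] at this
    linarith [this]
end

section
/- Let α, c ∈ ℝ and let u : ℝ → ℝ be a smooth function such that v(x,t) := u(x − ct) solves the α-BBM equation v_t − v_xxt = −v_x − v·v_x + α(v·v_xxx + 2 v_x v_xx), and such that u and its derivatives u', u'', u''' tend to 0 at +∞. Then u satisfies the first-order ODE ((1−c)/2)·u² + (1/6)·u³ + (c/2)·(u')² − (α/2)·u·(u')² = 0 identically on ℝ. -/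
open Filter
open scoped ContDiff

/-- Partial derivative in the first (spatial) variable. -/
noncomputable def px (f : ℝ → ℝ → ℝ) : ℝ → ℝ → ℝ := fun x t => deriv (fun y => f y t) x

/-- Partial derivative in the second (temporal) variable. -/
noncomputable def pt (f : ℝ → ℝ → ℝ) : ℝ → ℝ → ℝ := fun x t => deriv (fun s => f x s) t

/-- Travelling wave ansatz v(x,t) = u(x - c t). -/
def tw (u : ℝ → ℝ) (c : ℝ) : ℝ → ℝ → ℝ := fun x t => u (x - c * t)

lemma px_tw (u : ℝ → ℝ) (c : ℝ) : px (tw u c) = tw (deriv u) c := by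
  funext x t
  simp only [px, tw]
  exact deriv_comp_sub_const (f := u) (c * t) x

lemma pt_tw (u : ℝ → ℝ) (c : ℝ) (hu : Differentiable ℝ u) (x t : ℝ) :
    pt (tw u c) x t = -c * deriv u (x - c * t) := by
  have hg : HasDerivAt (fun s : ℝ => x - c * s) (-c) t := by
    simpa using ((hasDerivAt_id t).const_mul c).const_sub x
  have h := ((hu (x - c * t)).hasDerivAt.comp t hg)
  simp only [pt, tw]
  rw [show (fun s => u (x - c * s)) = u ∘ (fun s => x - c * s) from rfl, h.deriv]; ring

lemma const_tendsto_zero (f : ℝ → ℝ) (hc : ∀ x y : ℝ, f x = f y)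
    (h : Tendsto f atTop (nhds 0)) : ∀ x, f x = 0 := by
  intro x
  have h2 : Tendsto f atTop (nhds (f x)) :=
    tendsto_const_nhds.congr (fun y => (hc x y))
  exact tendsto_nhds_unique h2 h

theorem stmt1 (α c : ℝ) (u : ℝ → ℝ) (hu : ContDiff ℝ (⊤ : ℕ∞) u)
    (hpde : ∀ x t : ℝ,
      pt (tw u c) x t - pt (px (px (tw u c))) x t =
        -(px (tw u c) x t) - tw u c x t * px (tw u c) x t
          + α * (tw u c x t * px (px (px (tw u c))) x t
              + 2 * px (tw u c) x t * px (px (tw u c)) x t))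
    (h0 : Tendsto u atTop (nhds 0))
    (h1 : Tendsto (deriv u) atTop (nhds 0))
    (h2 : Tendsto (deriv (deriv u)) atTop (nhds 0))
    (h3 : Tendsto (deriv (deriv (deriv u))) atTop (nhds 0)) :
    ∀ ξ : ℝ,
      ((1 - c)/2) * (u ξ)^2 + (1/6) * (u ξ)^3 + (c/2) * (deriv u ξ)^2
        - (α/2) * u ξ * (deriv u ξ)^2 = 0 := by
  set u1 := deriv u with hu1def
  set u2 := deriv u1 with hu2def
  set u3 := deriv u2 with hu3def
  have hu' : ContDiff ℝ ∞ u := hu.of_le (by simp)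
  have hu1 : ContDiff ℝ ∞ u1 := (contDiff_infty_iff_deriv.mp hu').2
  have hu2 : ContDiff ℝ ∞ u2 := (contDiff_infty_iff_deriv.mp hu1).2
  have hdu : Differentiable ℝ u := (contDiff_infty_iff_deriv.mp hu').1
  have hdu1 : Differentiable ℝ u1 := (contDiff_infty_iff_deriv.mp hu1).1
  have hdu2 : Differentiable ℝ u2 := (contDiff_infty_iff_deriv.mp hu2).1
  -- rewrite the PDE as an ODE
  have ode : ∀ ξ : ℝ,
      (1 - c) * u1 ξ + u ξ * u1 ξ + c * u3 ξ - α * (u ξ * u3 ξ + 2 * u1 ξ * u2 ξ) = 0 := by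
    intro ξ
    have h := hpde ξ 0
    rw [px_tw u c, px_tw u1 c, px_tw u2 c, pt_tw u c hdu, pt_tw u2 c hdu2] at h
    simp only [tw, mul_zero, sub_zero] at h
    rw [← hu1def, ← hu2def, ← hu3def] at h
    linarith
  -- first integration: G = 0
  set G : ℝ → ℝ := fun ξ =>
    (1 - c) * u ξ + (u ξ)^2 / 2 + c * u2 ξ - α * ((u1 ξ)^2 / 2 + u ξ * u2 ξ) with hGdef
  have hGd : ∀ ξ : ℝ, HasDerivAt G
      ((1 - c) * u1 ξ + u ξ * u1 ξ + c * u3 ξ - α * (u1 ξ * u2 ξ + (u1 ξ * u2 ξ + u ξ * u3 ξ)))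
      ξ := by
    intro ξ
    have ha : HasDerivAt (fun x => (1 - c) * u x) ((1 - c) * u1 ξ) ξ :=
      (hdu ξ).hasDerivAt.const_mul _
    have hb : HasDerivAt (fun x => (u x)^2 / 2) (u ξ * u1 ξ) ξ := by
      have := ((hdu ξ).hasDerivAt.pow 2).div_const 2
      exact this.congr_deriv (by simp only [hu1def, hu2def, hu3def]; push_cast; ring)
    have hc' : HasDerivAt (fun x => c * u2 x) (c * u3 ξ) ξ :=
      (hdu2 ξ).hasDerivAt.const_mul _
    have hd : HasDerivAt (fun x => α * ((u1 x)^2 / 2 + u x * u2 x))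
        (α * (u1 ξ * u2 ξ + (u1 ξ * u2 ξ + u ξ * u3 ξ))) ξ := by
      have := ((((hdu1 ξ).hasDerivAt.pow 2).div_const 2).add
        ((hdu ξ).hasDerivAt.mul (hdu2 ξ).hasDerivAt)).const_mul α
      exact this.congr_deriv (by simp only [hu1def, hu2def, hu3def]; push_cast; ring)
    exact ((ha.add hb).add hc').sub hd
  have hGzero : ∀ ξ, G ξ = 0 := by
    apply const_tendsto_zero
    · intro x y
      apply is_const_of_deriv_eq_zero
      · exact fun z => (hGd z).differentiableAt
      · intro z
        rw [(hGd z).deriv]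
        have := ode z
        linarith
    · have : Tendsto G atTop
          (nhds ((1 - c) * 0 + 0^2 / 2 + c * 0 - α * (0^2 / 2 + 0 * 0))) := by
        have t4 : Tendsto (fun ξ => α * ((u1 ξ)^2 / 2 + u ξ * u2 ξ)) atTop
            (nhds (α * (0^2 / 2 + 0 * 0))) :=
          Tendsto.const_mul α (((h1.pow 2).div_const 2).add (h0.mul h2))
        exact (((h0.const_mul (1 - c)).add ((h0.pow 2).div_const 2)).add
          (h2.const_mul c)).sub t4
      simpa using this
  -- second integration: F = 0
  set F : ℝ → ℝ := fun ξ =>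
    ((1 - c)/2) * (u ξ)^2 + (1/6) * (u ξ)^3 + (c/2) * (u1 ξ)^2
      - (α/2) * u ξ * (u1 ξ)^2 with hFdef
  have hFd : ∀ ξ : ℝ, HasDerivAt F
      (((1 - c)/2) * (2 * u ξ * u1 ξ) + (1/6) * (3 * (u ξ)^2 * u1 ξ)
        + (c/2) * (2 * u1 ξ * u2 ξ)
        - ((α/2) * u1 ξ * (u1 ξ)^2 + (α/2) * u ξ * (2 * u1 ξ * u2 ξ))) ξ := by
    intro ξ
    have ha : HasDerivAt (fun x => ((1 - c)/2) * (u x)^2)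
        (((1 - c)/2) * (2 * u ξ * u1 ξ)) ξ := by
      have := ((hdu ξ).hasDerivAt.pow 2).const_mul ((1 - c)/2)
      exact this.congr_deriv (by simp only [hu1def, hu2def, hu3def]; push_cast; ring)
    have hb : HasDerivAt (fun x => (1/6 : ℝ) * (u x)^3)
        ((1/6) * (3 * (u ξ)^2 * u1 ξ)) ξ := by
      have := ((hdu ξ).hasDerivAt.pow 3).const_mul (1/6 : ℝ)
      exact this.congr_deriv (by simp only [hu1def, hu2def, hu3def]; push_cast; ring)
    have hc' : HasDerivAt (fun x => (c/2) * (u1 x)^2)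
        ((c/2) * (2 * u1 ξ * u2 ξ)) ξ := by
      have := ((hdu1 ξ).hasDerivAt.pow 2).const_mul (c/2)
      exact this.congr_deriv (by simp only [hu1def, hu2def, hu3def]; push_cast; ring)
    have hd : HasDerivAt (fun x => (α/2) * u x * (u1 x)^2)
        ((α/2) * u1 ξ * (u1 ξ)^2 + (α/2) * u ξ * (2 * u1 ξ * u2 ξ)) ξ := by
      have := (((hdu ξ).hasDerivAt.const_mul (α/2)).mul ((hdu1 ξ).hasDerivAt.pow 2))
      exact this.congr_deriv (by simp only [hu1def, hu2def, hu3def, Pi.pow_apply]; push_cast; ring)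
    exact ((ha.add hb).add hc').sub hd
  have hFzero : ∀ ξ, F ξ = 0 := by
    apply const_tendsto_zero
    · intro x y
      apply is_const_of_deriv_eq_zero
      · exact fun z => (hFd z).differentiableAt
      · intro z
        rw [(hFd z).deriv]
        have hg := hGzero z
        simp only [hGdef] at hg
        linear_combination (u1 z) * hg
    · have : Tendsto F atTop
          (nhds (((1 - c)/2) * 0^2 + (1/6) * 0^3 + (c/2) * 0^2 - (α/2) * 0 * 0^2)) := by
        exact (((h0.pow 2).const_mul _).add ((h0.pow 3).const_mul _)).add
          ((h1.pow 2).const_mul _) |>.sub (((h0.const_mul _).mul (h1.pow 2)))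
      simpa using this
  intro ξ
  exact hFzero ξ
end

section
/- Suppose α, c ∈ ℝ and u : ℝ → ℝ is a C¹ function satisfying ((1−c)/2)·u² + (1/6)·u³ + (c/2)·(u')² − (α/2)·u·(u')² = 0 on ℝ, with a crest at ξ = 0, i.e. u(0) = a ≥ 0, u'(0) = 0, and a ≠ 0. Then a = 3(c − 1). In particular the speed–amplitude relation is independent of α. -/
theorem stmt2 (α c a : ℝ) (u : ℝ → ℝ) (hu : ContDiff ℝ 1 u)
    (hode : ∀ ξ : ℝ,
      ((1 - c)/2) * (u ξ)^2 + (1/6) * (u ξ)^3 + (c/2) * (deriv u ξ)^2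
        - (α/2) * u ξ * (deriv u ξ)^2 = 0)
    (hcrest : u 0 = a) (ha : 0 ≤ a) (hslope : deriv u 0 = 0) (hane : a ≠ 0) :
    a = 3 * (c - 1) := by
  have h := hode 0
  rw [hcrest, hslope] at h
  have h2 : a^2 * ((1 - c)/2 + a/6) = 0 := by ring_nf; ring_nf at h; linarith
  have : (1 - c)/2 + a/6 = 0 := by
    rcases mul_eq_zero.mp h2 with h3 | h3
    · exact absurd (pow_eq_zero_iff (by norm_num)|>.mp h3) hane
    · exact h3
  linarith
end

section
/- Let u be a smooth function of (x, τ) satisfying u_τ − u_xxτ = −u_x − 3u·u_x + u·u_xxx + 2u_x·u_xx. Define z := u − u_xx + 1/2 and the convective derivative D_τ := ∂_τ + u·∂_x. Then D_τ z = −2 u_x · z. -/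
lemma myHasDerivAt_fst (F : ℝ × ℝ → ℝ) (hF : ContDiff ℝ (⊤ : ℕ∞) F) (x t : ℝ) :
    HasDerivAt (fun y => F (y, t)) (fderiv ℝ F (x, t) (1, 0)) x := by
  have h1 : HasFDerivAt F (fderiv ℝ F (x, t)) (x, t) :=
    (hF.differentiable (by simp) (x, t)).hasFDerivAt
  have h2 : HasDerivAt (fun y : ℝ => (y, t)) ((1 : ℝ), (0 : ℝ)) x :=
    HasDerivAt.prodMk (hasDerivAt_id x) (hasDerivAt_const x t)
  simpa [Function.comp_def] using h1.comp_hasDerivAt x h2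

lemma myHasDerivAt_snd (F : ℝ × ℝ → ℝ) (hF : ContDiff ℝ (⊤ : ℕ∞) F) (x t : ℝ) :
    HasDerivAt (fun s => F (x, s)) (fderiv ℝ F (x, t) (0, 1)) t := by
  have h1 : HasFDerivAt F (fderiv ℝ F (x, t)) (x, t) :=
    (hF.differentiable (by simp) (x, t)).hasFDerivAt
  have h2 : HasDerivAt (fun s : ℝ => (x, s)) ((0 : ℝ), (1 : ℝ)) t :=
    HasDerivAt.prodMk (hasDerivAt_const t x) (hasDerivAt_id t)
  simpa [Function.comp_def] using h1.comp_hasDerivAt t h2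

lemma smooth_px (u : ℝ → ℝ → ℝ) (hu : ContDiff ℝ (⊤ : ℕ∞) (fun p : ℝ × ℝ => u p.1 p.2)) :
    ContDiff ℝ (⊤ : ℕ∞) (fun p : ℝ × ℝ => px u p.1 p.2) := by
  have heq : (fun p : ℝ × ℝ => px u p.1 p.2)
      = fun p : ℝ × ℝ => fderiv ℝ (fun q : ℝ × ℝ => u q.1 q.2) p (1, 0) := by
    funext p
    exact (myHasDerivAt_fst _ hu p.1 p.2).deriv
  rw [heq]
  exact (hu.fderiv_right (by simp)).clm_apply contDiff_const

theorem stmt4 (u : ℝ → ℝ → ℝ) (hu : ContDiff ℝ (⊤ : ℕ∞) (fun p : ℝ × ℝ => u p.1 p.2))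
    (hpde : ∀ x τ : ℝ,
      pt u x τ - pt (px (px u)) x τ =
        -(px u x τ) - 3 * u x τ * px u x τ
          + u x τ * px (px (px u)) x τ + 2 * px u x τ * px (px u) x τ) :
    ∀ x τ : ℝ,
      pt (fun y s => u y s - px (px u) y s + 1/2) x τ
        + u x τ * px (fun y s => u y s - px (px u) y s + 1/2) x τ
      = -2 * px u x τ * (u x τ - px (px u) x τ + 1/2) := by
  intro x τ
  have h1 : ContDiff ℝ (⊤ : ℕ∞) (fun p : ℝ × ℝ => px u p.1 p.2) := smooth_px u hu
  have h2 : ContDiff ℝ (⊤ : ℕ∞) (fun p : ℝ × ℝ => px (px u) p.1 p.2) := smooth_px (px u) h1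
  have dut : DifferentiableAt ℝ (fun s => u x s) τ :=
    (myHasDerivAt_snd _ hu x τ).differentiableAt
  have dwt : DifferentiableAt ℝ (fun s => px (px u) x s) τ :=
    (myHasDerivAt_snd _ h2 x τ).differentiableAt
  have dux : DifferentiableAt ℝ (fun y => u y τ) x :=
    (myHasDerivAt_fst _ hu x τ).differentiableAt
  have dwx : DifferentiableAt ℝ (fun y => px (px u) y τ) x :=
    (myHasDerivAt_fst _ h2 x τ).differentiableAt
  have hzt : pt (fun y s => u y s - px (px u) y s + 1/2) x τ
      = pt u x τ - pt (px (px u)) x τ := by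
    show deriv (fun s => u x s - px (px u) x s + 1/2) τ = _
    rw [deriv_add_const, deriv_fun_sub dut dwt]; rfl
  have hzx : px (fun y s => u y s - px (px u) y s + 1/2) x τ
      = px u x τ - px (px (px u)) x τ := by
    show deriv (fun y => u y τ - px (px u) y τ + 1/2) x = _
    rw [deriv_add_const, deriv_fun_sub dux dwx]; rfl
  rw [hzt, hzx]
  linear_combination hpde x τ
end

section
/- Let u be a smooth function of (x, τ) with D_τ u = z and D_τ z = −2 u_x z, where D_τ = ∂_τ + u ∂_x. If additionally z = u − u_xx + 1/2, then u satisfies the rescaled eBBM₁⁄₃ equation u_τ − u_xxτ = −u_x − 3u·u_x + u·u_xxx + 2u_x·u_xx. -/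
lemma px_eq_fderiv {f : ℝ → ℝ → ℝ} (hf : ContDiff ℝ (⊤ : ℕ∞) (fun p : ℝ × ℝ => f p.1 p.2))
    (x t : ℝ) :
    px f x t = fderiv ℝ (fun p : ℝ × ℝ => f p.1 p.2) (x, t) ((1 : ℝ), (0 : ℝ)) := by
  have hg : HasDerivAt (fun y : ℝ => (y, t)) ((1 : ℝ), (0 : ℝ)) x :=
    HasDerivAt.prodMk (hasDerivAt_id x) (hasDerivAt_const x t)
  have hF := (hf.differentiable (by simp) (x, t)).hasFDerivAt
  exact (hF.comp_hasDerivAt x hg).deriv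

lemma pt_eq_fderiv {f : ℝ → ℝ → ℝ} (hf : ContDiff ℝ (⊤ : ℕ∞) (fun p : ℝ × ℝ => f p.1 p.2))
    (x t : ℝ) :
    pt f x t = fderiv ℝ (fun p : ℝ × ℝ => f p.1 p.2) (x, t) ((0 : ℝ), (1 : ℝ)) := by
  have hg : HasDerivAt (fun s : ℝ => (x, s)) ((0 : ℝ), (1 : ℝ)) t :=
    HasDerivAt.prodMk (hasDerivAt_const t x) (hasDerivAt_id t)
  have hF := (hf.differentiable (by simp) (x, t)).hasFDerivAt
  exact (hF.comp_hasDerivAt t hg).deriv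

lemma contDiff_px {f : ℝ → ℝ → ℝ} (hf : ContDiff ℝ (⊤ : ℕ∞) (fun p : ℝ × ℝ => f p.1 p.2)) :
    ContDiff ℝ (⊤ : ℕ∞) (fun p : ℝ × ℝ => px f p.1 p.2) := by
  have h1 : ContDiff ℝ (⊤ : ℕ∞)
      (fun p : ℝ × ℝ => fderiv ℝ (fun q : ℝ × ℝ => f q.1 q.2) p ((1 : ℝ), (0 : ℝ))) :=
    (hf.fderiv_right (by simp)).clm_apply contDiff_const
  have : (fun p : ℝ × ℝ => px f p.1 p.2) =
      fun p : ℝ × ℝ => fderiv ℝ (fun q : ℝ × ℝ => f q.1 q.2) p ((1 : ℝ), (0 : ℝ)) := by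
    funext p
    exact px_eq_fderiv hf p.1 p.2
  rw [this]; exact h1

lemma hasDerivAt_px {f : ℝ → ℝ → ℝ} (hf : ContDiff ℝ (⊤ : ℕ∞) (fun p : ℝ × ℝ => f p.1 p.2))
    (x t : ℝ) : HasDerivAt (fun y => f y t) (px f x t) x := by
  have h : DifferentiableAt ℝ (fun y => f y t) x := by
    have := ((hf.differentiable (by simp)) (x, t)).comp x
      ((DifferentiableAt.prodMk (differentiableAt_id : DifferentiableAt ℝ (id : ℝ → ℝ) x) (differentiableAt_const t)))
    exact this
  exact h.hasDerivAt

lemma hasDerivAt_pt {f : ℝ → ℝ → ℝ} (hf : ContDiff ℝ (⊤ : ℕ∞) (fun p : ℝ × ℝ => f p.1 p.2))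
    (x t : ℝ) : HasDerivAt (fun s => f x s) (pt f x t) t := by
  have h : DifferentiableAt ℝ (fun s => f x s) t := by
    have := ((hf.differentiable (by simp)) (x, t)).comp t
      ((DifferentiableAt.prodMk (differentiableAt_const x) differentiableAt_id))
    exact this
  exact h.hasDerivAt

theorem stmt7 (u z : ℝ → ℝ → ℝ)
    (hu : ContDiff ℝ (⊤ : ℕ∞) (fun p : ℝ × ℝ => u p.1 p.2))
    (hz : ContDiff ℝ (⊤ : ℕ∞) (fun p : ℝ × ℝ => z p.1 p.2))
    (h1 : ∀ x τ : ℝ, pt u x τ + u x τ * px u x τ = z x τ)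
    (h2 : ∀ x τ : ℝ, pt z x τ + u x τ * px z x τ = -2 * px u x τ * z x τ)
    (hconstraint : ∀ x τ : ℝ, z x τ = u x τ - px (px u) x τ + 1/2) :
    ∀ x τ : ℝ,
      pt u x τ - pt (px (px u)) x τ =
        -(px u x τ) - 3 * u x τ * px u x τ + u x τ * px (px (px u)) x τ
          + 2 * px u x τ * px (px u) x τ := by
  intro x τ
  have hu2 : ContDiff ℝ (⊤ : ℕ∞) (fun p : ℝ × ℝ => px (px u) p.1 p.2) := contDiff_px (contDiff_px hu)
  -- pt z = pt u - pt (px (px u))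
  have hptz : pt z x τ = pt u x τ - pt (px (px u)) x τ := by
    have hd : HasDerivAt (fun s => z x s) (pt u x τ - pt (px (px u)) x τ) τ := by
      have h := ((hasDerivAt_pt hu x τ).sub (hasDerivAt_pt hu2 x τ)).add_const (1/2 : ℝ)
      have heq : (fun s => u x s - px (px u) x s + 1/2) = fun s => z x s := by
        funext s; rw [hconstraint x s]
      exact h.congr_of_eventuallyEq (Filter.Eventually.of_forall fun s => by simp [hconstraint x s])
    exact hd.deriv
  -- px z = px u - px (px (px u))
  have hpxz : px z x τ = px u x τ - px (px (px u)) x τ := by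
    have hd : HasDerivAt (fun y => z y τ) (px u x τ - px (px (px u)) x τ) x := by
      have h := ((hasDerivAt_px hu x τ).sub (hasDerivAt_px hu2 x τ)).add_const (1/2 : ℝ)
      have heq : (fun y => u y τ - px (px u) y τ + 1/2) = fun y => z y τ := by
        funext y; rw [hconstraint y τ]
      exact h.congr_of_eventuallyEq (Filter.Eventually.of_forall fun y => by simp [hconstraint y τ])
    exact hd.deriv
  have h2' := h2 x τ
  rw [hptz, hpxz, hconstraint x τ] at h2'
  linarith [h2']
end
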